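/- For s ∈ (0,1) and α ∈ [s, 1+s), the function ψ(μ) = μ^{2s} ∫_μ^1 dt / ((1−t)^{α−s} t^{1+2s}) is bounded on (0,1]: there exists C > 0 (depending on s, α) with sup_{μ∈(0,1]} ψ(μ) ≤ C. Moreover ψ(μ) → 1/(2s) as μ → 0⁺. -/

import Mathlib

/-!
Since `(1 - t)^{-(α-s)} ≥ 1`, `ψ(μ)` is at least `μ^{2s} ∫_μ^1 t^{-1-2s} dt = (1 - μ^{2s})/(2s)`.
For an upper bound split the integral at `δ ∈ (0,1)`: below `δ` the factor `(1 - t)^{-(α-s)}`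
is at most `(1 - δ)^{-(α-s)}`, which contributes at most `(1 - δ)^{-(α-s)}/(2s)`, while above `δ`
the integral is finite (as `α - s < 1`) and is multiplied by `μ^{2s} → 0`. Letting `μ → 0` and
then `δ → 0` gives the limit; `δ = 1/2` gives the bound.
-/

open MeasureTheory Set Filter Topology

theorem tendsto_of_tendsto_of_eventually_le_of_forall_eventually_lt {ι γ : Type*}
    [LinearOrder γ] [TopologicalSpace γ] [OrderTopology γ] {l : Filter ι} {f g : ι → γ} {L : γ}
    (hg : Tendsto g l (𝓝 L)) (hgf : g ≤ᶠ[l] f) (hf : ∀ u > L, ∀ᶠ x in l, f x < u) :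
    Tendsto f l (𝓝 L) :=
  tendsto_order.2 ⟨fun a ha => ((tendsto_order.1 hg).1 a ha).mp <|
    hgf.mono fun _ hle hlt => hlt.trans_le hle, hf⟩

section

variable {b c β : ℝ}

theorem one_div_one_sub_rpow_mul_rpow {t : ℝ} (ht₀ : 0 ≤ t) (ht₁ : t ≤ 1) :
    1 / ((1 - t) ^ b * t ^ c) = (1 - t) ^ (-b) * t ^ (-c) := by
  rw [Real.rpow_neg (sub_nonneg.2 ht₁), Real.rpow_neg ht₀, one_div, mul_inv]

theorem one_div_one_sub_rpow_mul_rpow_nonneg {t : ℝ} (ht₀ : 0 ≤ t) (ht₁ : t ≤ 1) :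
    0 ≤ 1 / ((1 - t) ^ b * t ^ c) := by
  have := Real.rpow_nonneg (sub_nonneg.2 ht₁) b
  have := Real.rpow_nonneg ht₀ c
  positivity

theorem integrableOn_one_div_one_sub_rpow_mul_rpow (hb : b < 1) {a : ℝ} (ha : 0 < a) :
    IntegrableOn (fun t => 1 / ((1 - t) ^ b * t ^ c)) (Ioo a 1) := by
  refine IntegrableOn.mono_set ?_ Ioo_subset_Icc_self
  rcases lt_or_ge 1 a with ha₁ | ha₁
  · simp [Icc_eq_empty_of_lt ha₁]
  have hsing : IntegrableOn (fun t : ℝ => (1 - t) ^ (-b)) (Icc a 1) := by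
    have h : IntervalIntegrable (fun t : ℝ => t ^ (-b)) volume (1 - a) (1 - 1) :=
      intervalIntegral.intervalIntegrable_rpow' (by linarith)
    exact (intervalIntegrable_iff_integrableOn_Icc_of_le ha₁).1 (by simpa using h.comp_sub_left 1)
  have hcont : ContinuousOn (fun t : ℝ => t ^ (-c)) (Icc a 1) := fun t ht =>
    (Real.continuousAt_rpow_const t _ (Or.inl (ha.trans_le ht.1).ne')).continuousWithinAt
  refine (hsing.mul_continuousOn hcont isCompact_Icc).congr_fun (fun t ht => ?_) measurableSet_Icc
  exact (one_div_one_sub_rpow_mul_rpow (ha.le.trans ht.1) ht.2).symm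

/-- The paper's `ψ` is `psi (α - s) (2 * s)`. -/
noncomputable def psi (b β μ : ℝ) : ℝ :=
  μ ^ β * ∫ t in Ioo μ 1, 1 / ((1 - t) ^ b * t ^ (1 + β))

theorem one_sub_rpow_div_le_psi (hb₀ : 0 ≤ b) (hb₁ : b < 1) (hβ : 0 < β) {μ : ℝ} (hμ : 0 < μ)
    (hμ₁ : μ ≤ 1) : (1 - μ ^ β) / β ≤ psi b β μ := by
  have hpow : ∫ t in Ioo μ 1, t ^ (-(1 + β)) = (μ ^ (-β) - 1) / β := by
    rw [← integral_Ioc_eq_integral_Ioo, ← intervalIntegral.integral_of_le hμ₁,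
      integral_rpow (Or.inr ⟨by linarith, notMem_uIcc_of_lt hμ one_pos⟩)]
    rw [show -(1 + β) + 1 = -β by ring, Real.one_rpow, div_neg, ← neg_div, neg_sub]
  have hmono : ∫ t in Ioo μ 1, t ^ (-(1 + β)) ≤
      ∫ t in Ioo μ 1, 1 / ((1 - t) ^ b * t ^ (1 + β)) := by
    refine setIntegral_mono_on ((integrableOn_Ioi_rpow_of_lt (by linarith) hμ).mono_set
      Ioo_subset_Ioi_self) (integrableOn_one_div_one_sub_rpow_mul_rpow hb₁ hμ)
      measurableSet_Ioo fun t ht => ?_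
    have ht₀ : 0 < t := hμ.trans ht.1
    rw [one_div_one_sub_rpow_mul_rpow ht₀.le ht.2.le]
    refine le_mul_of_one_le_left (Real.rpow_nonneg ht₀.le _) ?_
    exact Real.one_le_rpow_of_pos_of_le_one_of_nonpos (by linarith [ht.2]) (by linarith [ht₀])
      (by linarith)
  calc (1 - μ ^ β) / β = μ ^ β * ((μ ^ (-β) - 1) / β) := by
        rw [mul_div_assoc', mul_sub, ← Real.rpow_add hμ, add_neg_cancel, Real.rpow_zero, mul_one]
    _ ≤ psi b β μ := by
        rw [psi, ← hpow]
        exact mul_le_mul_of_nonneg_left hmono (Real.rpow_nonneg hμ.le _)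

theorem psi_le (hb₀ : 0 ≤ b) (hb₁ : b < 1) (hβ : 0 < β) {μ δ : ℝ} (hμ : 0 < μ) (hδ : 0 < δ)
    (hδ₁ : δ < 1) : psi b β μ ≤
      (1 - δ) ^ (-b) / β + μ ^ β * ∫ t in Ioo δ 1, 1 / ((1 - t) ^ b * t ^ (1 + β)) := by
  set F : ℝ → ℝ := fun t => 1 / ((1 - t) ^ b * t ^ (1 + β))
  have hpow_int : IntegrableOn (fun t : ℝ => (1 - δ) ^ (-b) * t ^ (-(1 + β))) (Ioi μ) :=
    (integrableOn_Ioi_rpow_of_lt (by linarith) hμ).const_mul _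
  have hnear : ∫ t in Ioo μ 1 ∩ Iic δ, F t ≤ (1 - δ) ^ (-b) * (μ ^ (-β) / β) := calc
    ∫ t in Ioo μ 1 ∩ Iic δ, F t ≤ ∫ t in Ioo μ 1 ∩ Iic δ, (1 - δ) ^ (-b) * t ^ (-(1 + β)) := by
        refine setIntegral_mono_on
          ((integrableOn_one_div_one_sub_rpow_mul_rpow hb₁ hμ).mono_set inter_subset_left)
          (hpow_int.mono_set (inter_subset_left.trans Ioo_subset_Ioi_self))
          (measurableSet_Ioo.inter measurableSet_Iic) fun t ⟨ht, htδ⟩ => ?_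
        have ht₀ : 0 < t := hμ.trans ht.1
        rw [show F t = _ from one_div_one_sub_rpow_mul_rpow ht₀.le ht.2.le]
        exact mul_le_mul_of_nonneg_right
          (Real.rpow_le_rpow_of_nonpos (by linarith) (by linarith [mem_Iic.1 htδ]) (by linarith))
          (Real.rpow_nonneg ht₀.le _)
    _ ≤ ∫ t in Ioi μ, (1 - δ) ^ (-b) * t ^ (-(1 + β)) := by
        refine setIntegral_mono_set hpow_int ?_
          (inter_subset_left.trans Ioo_subset_Ioi_self).eventuallyLE
        filter_upwards [ae_restrict_mem measurableSet_Ioi] with t ht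
        exact mul_nonneg (Real.rpow_nonneg (by linarith) _) (Real.rpow_nonneg (hμ.trans ht).le _)
    _ = (1 - δ) ^ (-b) * (μ ^ (-β) / β) := by
        rw [integral_const_mul, integral_Ioi_rpow_of_lt (by linarith) hμ,
          show -(1 + β) + 1 = -β by ring, div_neg, neg_div, neg_neg]
  have hfar : ∫ t in Ioo μ 1 \ Iic δ, F t ≤ ∫ t in Ioo δ 1, F t := by
    refine setIntegral_mono_set (integrableOn_one_div_one_sub_rpow_mul_rpow hb₁ hδ) ?_ ?_
    · filter_upwards [ae_restrict_mem measurableSet_Ioo] with t ht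
      exact one_div_one_sub_rpow_mul_rpow_nonneg (hδ.trans ht.1).le ht.2.le
    · have hsub : Ioo μ 1 \ Iic δ ⊆ Ioo δ 1 := fun t ⟨ht, htδ⟩ => ⟨not_le.1 htδ, ht.2⟩
      exact hsub.eventuallyLE
  calc psi b β μ
      = μ ^ β * (∫ t in Ioo μ 1 ∩ Iic δ, F t) + μ ^ β * ∫ t in Ioo μ 1 \ Iic δ, F t := by
        rw [psi, ← mul_add, integral_inter_add_sdiff measurableSet_Iic
          (integrableOn_one_div_one_sub_rpow_mul_rpow hb₁ hμ)]
    _ ≤ μ ^ β * ((1 - δ) ^ (-b) * (μ ^ (-β) / β)) + μ ^ β * ∫ t in Ioo δ 1, F t := by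
        gcongr
    _ = (1 - δ) ^ (-b) / β + μ ^ β * ∫ t in Ioo δ 1, F t := by
        rw [mul_left_comm, mul_div_assoc', ← Real.rpow_add hμ, add_neg_cancel, Real.rpow_zero,
          mul_one_div]

theorem tendsto_psi (hb₀ : 0 ≤ b) (hb₁ : b < 1) (hβ : 0 < β) :
    Tendsto (psi b β) (𝓝[>] 0) (𝓝 (1 / β)) := by
  have hpow : Tendsto (fun μ : ℝ => μ ^ β) (𝓝[>] 0) (𝓝 0) := by
    have h := (Real.continuousAt_rpow_const 0 β (Or.inr hβ.le)).tendsto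
    rw [Real.zero_rpow hβ.ne'] at h
    exact h.mono_left nhdsWithin_le_nhds
  have hlower : Tendsto (fun μ : ℝ => (1 - μ ^ β) / β) (𝓝[>] 0) (𝓝 (1 / β)) := by
    simpa using (hpow.const_sub 1).div_const β
  refine tendsto_of_tendsto_of_eventually_le_of_forall_eventually_lt hlower ?_ fun u hu => ?_
  · filter_upwards [Ioo_mem_nhdsGT one_pos] with μ hμ
    exact one_sub_rpow_div_le_psi hb₀ hb₁ hβ hμ.1 hμ.2.le
  · have hnear : Tendsto (fun δ : ℝ => (1 - δ) ^ (-b) / β) (𝓝[>] 0) (𝓝 (1 / β)) := by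
      have h : ContinuousAt (fun δ : ℝ => (1 - δ) ^ (-b) / β) 0 :=
        ((continuousAt_const.sub continuousAt_id).rpow_const (Or.inl (by simp))).div_const β
      simpa using h.tendsto.mono_left nhdsWithin_le_nhds
    obtain ⟨δ, hδu, hδ, hδ₁⟩ :=
      ((hnear.eventually (gt_mem_nhds hu)).and (Ioo_mem_nhdsGT one_pos)).exists
    set T := ∫ t in Ioo δ 1, 1 / ((1 - t) ^ b * t ^ (1 + β))
    have htail : Tendsto (fun μ : ℝ => μ ^ β * T) (𝓝[>] 0) (𝓝 0) := by
      simpa using hpow.mul_const T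
    filter_upwards [htail.eventually (gt_mem_nhds (sub_pos.2 hδu)), self_mem_nhdsWithin]
      with μ hμT hμ
    linarith [psi_le hb₀ hb₁ hβ hμ hδ hδ₁ (μ := μ)]

end

theorem psi_bounded_and_limit
    (s α : ℝ) (hs : s ∈ Set.Ioo (0 : ℝ) 1) (hα : α ∈ Set.Ico s (1 + s)) :
    (∃ C > 0, ∀ μ ∈ Set.Ioc (0 : ℝ) 1,
      μ ^ (2 * s) * (∫ t in Set.Ioo μ 1,
        1 / ((1 - t) ^ (α - s) * t ^ (1 + 2 * s))) ≤ C) ∧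
    Filter.Tendsto
      (fun μ : ℝ => μ ^ (2 * s) * (∫ t in Set.Ioo μ 1,
        1 / ((1 - t) ^ (α - s) * t ^ (1 + 2 * s))))
      (nhdsWithin 0 (Set.Ioi 0)) (nhds (1 / (2 * s))) := by
  have hb₀ : 0 ≤ α - s := by linarith [hα.1]
  have hb₁ : α - s < 1 := by linarith [hα.2]
  have hβ : 0 < 2 * s := by linarith [hs.1]
  refine ⟨?_, tendsto_psi hb₀ hb₁ hβ⟩
  set T := ∫ t in Ioo (1 / 2 : ℝ) 1, 1 / ((1 - t) ^ (α - s) * t ^ (1 + 2 * s))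
  have hT : 0 ≤ T := setIntegral_nonneg measurableSet_Ioo fun t ht =>
    one_div_one_sub_rpow_mul_rpow_nonneg (by linarith [ht.1]) ht.2.le
  refine ⟨(1 - 1 / 2) ^ (-(α - s)) / (2 * s) + T, by positivity, fun μ ⟨hμ, hμ₁⟩ => ?_⟩
  calc psi (α - s) (2 * s) μ ≤ (1 - 1 / 2) ^ (-(α - s)) / (2 * s) + μ ^ (2 * s) * T :=
        psi_le hb₀ hb₁ hβ hμ (by norm_num) (by norm_num)
    _ ≤ (1 - 1 / 2) ^ (-(α - s)) / (2 * s) + T := by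
        gcongr
        exact mul_le_of_le_one_left hT (Real.rpow_le_one hμ.le hμ₁ hβ.le)
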